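/- First tropical duality (Theorem 1.2, identity (1.7)): assume the global sign-coherence hypothesis. Then for every n×n skew-symmetrizable integer matrix B and every finite sequence w of indices in {1,…,n}, the matrix C^{-Bᵀ}(w) is invertible and (G^B(w))ᵀ = (C^{-Bᵀ}(w))⁻¹, i.e. (G^B(w))ᵀ · C^{-Bᵀ}(w) = I. -/

import Mathlib

open Matrix

/-- Entrywise positive part `[B]₊`. -/
def matPos {n : ℕ} (B : Matrix (Fin n) (Fin n) ℤ) : Matrix (Fin n) (Fin n) ℤ :=
  fun i j => max (B i j) 0

/-- `B^{k•}` : the matrix `B` with all entries outside row `k` set to zero. -/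
def rowR {n : ℕ} (B : Matrix (Fin n) (Fin n) ℤ) (k : Fin n) : Matrix (Fin n) (Fin n) ℤ :=
  fun i j => if i = k then B i j else 0

/-- `B^{•k}` : the matrix `B` with all entries outside column `k` set to zero. -/
def colR {n : ℕ} (B : Matrix (Fin n) (Fin n) ℤ) (k : Fin n) : Matrix (Fin n) (Fin n) ℤ :=
  fun i j => if j = k then B i j else 0

/-- `J_k` : the identity matrix with its `(k,k)` entry replaced by `-1`. -/
def Jmat (n : ℕ) (k : Fin n) : Matrix (Fin n) (Fin n) ℤ :=
  Matrix.diagonal (fun i => if i = k then -1 else 1)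

/-- Matrix mutation `μ_k(B)`. -/
def mutB {n : ℕ} (B : Matrix (Fin n) (Fin n) ℤ) (k : Fin n) : Matrix (Fin n) (Fin n) ℤ :=
  fun i j =>
    if i = k ∨ j = k then -B i j
    else B i j + max (B i k) 0 * max (B k j) 0 - max (-B i k) 0 * max (-B k j) 0

/-- Mutation of the `C`-matrix in direction `l`, where `B` is the current exchange matrix. -/
def mutC {n : ℕ} (B C : Matrix (Fin n) (Fin n) ℤ) (l : Fin n) : Matrix (Fin n) (Fin n) ℤ :=
  fun i j =>
    if j = l then -C i j
    else C i j + max (C i l) 0 * max (B l j) 0 - max (-C i l) 0 * max (-B l j) 0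

/-- One step of the simultaneous `(B, C, G)` recursion with initial exchange matrix `B0`. -/
def BCGstep {n : ℕ} (B0 : Matrix (Fin n) (Fin n) ℤ)
    (p : Matrix (Fin n) (Fin n) ℤ × Matrix (Fin n) (Fin n) ℤ × Matrix (Fin n) (Fin n) ℤ)
    (l : Fin n) :
    Matrix (Fin n) (Fin n) ℤ × Matrix (Fin n) (Fin n) ℤ × Matrix (Fin n) (Fin n) ℤ :=
  (mutB p.1 l, mutC p.1 p.2.1 l,
    p.2.2 * (Jmat n l + colR (matPos p.1) l) - B0 * colR (matPos p.2.1) l)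

/-- The triple `(B_m, C_m, G_m)` obtained from `(B0, I, I)` by mutating along the word `w`. -/
def BCG {n : ℕ} (B0 : Matrix (Fin n) (Fin n) ℤ) (w : List (Fin n)) :
    Matrix (Fin n) (Fin n) ℤ × Matrix (Fin n) (Fin n) ℤ × Matrix (Fin n) (Fin n) ℤ :=
  w.foldl (BCGstep B0) (B0, 1, 1)

/-- `B^B(w)` : the exchange matrix at the end of the word `w`. -/
def Bmat {n : ℕ} (B0 : Matrix (Fin n) (Fin n) ℤ) (w : List (Fin n)) : Matrix (Fin n) (Fin n) ℤ :=
  (BCG B0 w).1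

/-- `C^B(w)` : the matrix of c-vectors at the end of the word `w`. -/
def Cmat {n : ℕ} (B0 : Matrix (Fin n) (Fin n) ℤ) (w : List (Fin n)) : Matrix (Fin n) (Fin n) ℤ :=
  (BCG B0 w).2.1

/-- `G^B(w)` : the matrix of g-vectors at the end of the word `w`. -/
def Gmat {n : ℕ} (B0 : Matrix (Fin n) (Fin n) ℤ) (w : List (Fin n)) : Matrix (Fin n) (Fin n) ℤ :=
  (BCG B0 w).2.2

/-- `B` is skew-symmetrized by the diagonal matrix with (positive) diagonal entries `d`,
i.e. `Bᵀ = -D B D⁻¹`, stated integrally as `Bᵀ D = -(D B)`. -/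
def SkewSymmBy {n : ℕ} (B : Matrix (Fin n) (Fin n) ℤ) (d : Fin n → ℤ) : Prop :=
  (∀ i, 0 < d i) ∧ Bᵀ * Matrix.diagonal d = -(Matrix.diagonal d * B)

/-- `B` is skew-symmetrizable. -/
def SkewSymmetrizable {n : ℕ} (B : Matrix (Fin n) (Fin n) ℤ) : Prop :=
  ∃ d : Fin n → ℤ, SkewSymmBy B d

/-- Every column of `C` has all entries nonnegative or all entries nonpositive. -/
def SignCoherent {n : ℕ} (C : Matrix (Fin n) (Fin n) ℤ) : Prop :=
  ∀ j, (∀ i, 0 ≤ C i j) ∨ (∀ i, C i j ≤ 0)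

/-- The global sign-coherence hypothesis in rank `n`: all C-matrices of all cluster patterns
of rank `n` are sign-coherent. -/
def GlobalSC (n : ℕ) : Prop :=
  ∀ B' : Matrix (Fin n) (Fin n) ℤ, SkewSymmetrizable B' →
    ∀ w' : List (Fin n), SignCoherent (Cmat B' w')

/-- The sign `ε_j(C)` of the `j`-th column of a sign-coherent matrix `C`:
`-1` if column `j` contains a negative entry, `1` otherwise. -/
def epsCol {n : ℕ} (C : Matrix (Fin n) (Fin n) ℤ) (j : Fin n) : ℤ :=
  if ∃ i, C i j < 0 then -1 else 1

/-! Let `ε` be the sign of the (sign-coherent) column `l` of `C = C^B(w)`. Mutation in direction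
`l` then acts by `C ↦ C F_ε`, `B_w ↦ E_ε B_w F_ε` and, as long as `B C = G B_w`, by `G ↦ G E_ε`,
where `E_ε² = I` and `F_εᵀ D = D E_ε` for the skew-symmetrizer `D`. Induction along `w` gives
`B C = G B_w` and `Gᵀ D C = D`. Finally `-Bᵀ = D B D⁻¹`, and the mutation rules for `B` and `C`
commute with this rescaling, so `C^{-Bᵀ}(w) = D C D⁻¹` and `Gᵀ C^{-Bᵀ}(w) = Gᵀ D C D⁻¹ = I`. -/

section Scalar

lemma max_neg_mul_add_mul_max (ε a c : ℤ) (hε : ε = 1 ∨ ε = -1) :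
    max (-(ε * a)) 0 * c + a * max (ε * c) 0
      = max a 0 * max c 0 - max (-a) 0 * max (-c) 0 := by
  have ha := max_zero_sub_max_neg_zero_eq_self a
  have hc := max_zero_sub_max_neg_zero_eq_self c
  rcases hε with rfl | rfl
  · simp only [one_mul]
    linear_combination (-max (-a) 0) * hc - max c 0 * ha
  · simp only [neg_mul, one_mul, neg_neg]
    linear_combination (-max a 0) * hc - max (-c) 0 * ha

lemma mul_max_eq_of_mul_nonneg (ε c b : ℤ) (hε : ε = 1 ∨ ε = -1) (hc : 0 ≤ ε * c) :
    c * max (ε * b) 0 = max c 0 * max b 0 - max (-c) 0 * max (-b) 0 := by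
  rcases hε with rfl | rfl
  · rw [one_mul] at hc ⊢
    rw [max_eq_left hc, max_eq_right (neg_nonpos.2 hc)]; ring
  · rw [neg_one_mul, neg_nonneg] at hc
    rw [neg_one_mul, max_eq_right hc, max_eq_left (neg_nonneg.2 hc)]; ring

lemma max_mul_max_rescale {a a' b b' di dl dj : ℤ} (hi : 0 ≤ di) (hl : 0 ≤ dl) (hj : 0 ≤ dj)
    (ha : a' * dl = di * a) (hb : b' * dj = dl * b) :
    max a' 0 * max b' 0 * dj = di * (max a 0 * max b 0) := by
  calc max a' 0 * max b' 0 * dj = max a' 0 * (dl * max b 0) := by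
        rw [mul_assoc, max_mul_of_nonneg _ _ hj, zero_mul, hb, mul_max_of_nonneg _ _ hl, mul_zero]
    _ = max a' 0 * dl * max b 0 := by ring
    _ = max (a' * dl) 0 * max b 0 := by rw [max_mul_of_nonneg _ _ hl, zero_mul]
    _ = di * (max a 0 * max b 0) := by
        rw [ha, ← mul_assoc, mul_max_of_nonneg _ _ hi, mul_zero]

lemma mutation_formula_rescale {x x' a a' b b' di dl dj : ℤ} (hi : 0 ≤ di) (hl : 0 ≤ dl)
    (hj : 0 ≤ dj) (hx : x' * dj = di * x) (ha : a' * dl = di * a) (hb : b' * dj = dl * b) :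
    (x' + max a' 0 * max b' 0 - max (-a') 0 * max (-b') 0) * dj
      = di * (x + max a 0 * max b 0 - max (-a) 0 * max (-b) 0) := by
  have hpos := max_mul_max_rescale hi hl hj ha hb
  have hneg := max_mul_max_rescale (a := -a) (a' := -a') (b := -b) (b' := -b') hi hl hj
    (by linear_combination -ha) (by linear_combination -hb)
  linear_combination hx + hpos - hneg

end Scalar

lemma Matrix.mul_diagonal_right_cancel {m k R : Type*} [Fintype k] [DecidableEq k]
    [NonUnitalNonAssocSemiring R] [IsRightCancelMulZero R] {X Y : Matrix m k R} {d : k → R}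
    (hd : ∀ i, d i ≠ 0) (h : X * diagonal d = Y * diagonal d) : X = Y := by
  ext i j
  have hij := congr_fun₂ h i j
  rw [mul_diagonal, mul_diagonal] at hij
  exact mul_right_cancel₀ (hd j) hij

section

variable {n : ℕ}

section Elementary

/-- `Emat B (-ε) l` and `Fmat B ε l` are the matrices `E_ε` and `F_ε` of the factorization
`μ_l(B) = E_ε B F_ε` of matrix mutation. -/
def Emat (B : Matrix (Fin n) (Fin n) ℤ) (s : ℤ) (l : Fin n) : Matrix (Fin n) (Fin n) ℤ :=
  fun i j => if j = l then (if i = l then -1 else max (s * B i l) 0)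
             else (if i = j then 1 else 0)

def Fmat (B : Matrix (Fin n) (Fin n) ℤ) (s : ℤ) (l : Fin n) : Matrix (Fin n) (Fin n) ℤ :=
  fun i j => if i = l then (if j = l then -1 else max (s * B l j) 0)
             else (if i = j then 1 else 0)

lemma Emat_mul_apply (B Y : Matrix (Fin n) (Fin n) ℤ) (s : ℤ) (l i j : Fin n) :
    (Emat B s l * Y) i j
      = if i = l then -Y l j else Y i j + max (s * B i l) 0 * Y l j := by
  split_ifs with hi
  · simp [Matrix.mul_apply, Emat, hi, ite_mul, Finset.sum_ite, Finset.filter_eq']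
  · simp [Matrix.mul_apply, Emat, hi, ite_mul, Finset.sum_ite, Finset.filter_ne', Finset.filter_eq',
      add_comm]

lemma mul_Fmat_apply (X B : Matrix (Fin n) (Fin n) ℤ) (s : ℤ) (l i j : Fin n) :
    (X * Fmat B s l) i j
      = if j = l then -X i l else X i j + X i l * max (s * B l j) 0 := by
  split_ifs with hj
  · simp [Matrix.mul_apply, Fmat, hj, mul_ite, Finset.sum_ite, Finset.filter_eq']
  · simp [Matrix.mul_apply, Fmat, hj, mul_ite, Finset.sum_ite, Finset.filter_ne', Finset.filter_eq',
      add_comm]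

lemma Emat_mul_self (B : Matrix (Fin n) (Fin n) ℤ) (s : ℤ) (l : Fin n) :
    Emat B s l * Emat B s l = 1 := by
  ext i j
  rw [Emat_mul_apply]
  by_cases hi : i = l <;> by_cases hj : j = l <;>
    simp [Emat, Matrix.one_apply, hi, hj, @eq_comm _ l j]

lemma mutB_eq_Emat_mul_mul_Fmat (B : Matrix (Fin n) (Fin n) ℤ) (l : Fin n) (ε : ℤ)
    (hε : ε = 1 ∨ ε = -1) (hll : B l l = 0) :
    mutB B l = Emat B (-ε) l * (B * Fmat B ε l) := by
  ext i j
  rw [Emat_mul_apply, mul_Fmat_apply, mul_Fmat_apply]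
  by_cases hi : i = l
  · by_cases hj : j = l <;> simp [mutB, hi, hj, hll]
  by_cases hj : j = l
  · simp [mutB, hi, hj, hll]
  simp only [mutB, hi, hj, or_self, if_false, hll, zero_mul, add_zero, neg_mul]
  linear_combination -max_neg_mul_add_mul_max ε (B i l) (B l j) hε

end Elementary

section SignCoherence

lemma epsCol_eq_one_or_neg_one (C : Matrix (Fin n) (Fin n) ℤ) (l : Fin n) :
    epsCol C l = 1 ∨ epsCol C l = -1 := by
  unfold epsCol; split_ifs <;> simp

lemma SignCoherent.nonpos_of_neg {C : Matrix (Fin n) (Fin n) ℤ} (hC : SignCoherent C)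
    {p l : Fin n} (hp : C p l < 0) (i : Fin n) : C i l ≤ 0 :=
  (hC l).resolve_left (fun h => (h p).not_gt hp) i

lemma SignCoherent.epsCol_mul_nonneg {C : Matrix (Fin n) (Fin n) ℤ} (hC : SignCoherent C)
    (l i : Fin n) : 0 ≤ epsCol C l * C i l := by
  unfold epsCol
  split_ifs with hneg
  · obtain ⟨p, hp⟩ := hneg
    linarith [hC.nonpos_of_neg hp i]
  · simp only [not_exists, not_lt] at hneg
    linarith [hneg i]

lemma mutC_eq_mul_Fmat (B : Matrix (Fin n) (Fin n) ℤ) {C : Matrix (Fin n) (Fin n) ℤ}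
    (hC : SignCoherent C) (l : Fin n) : mutC B C l = C * Fmat B (epsCol C l) l := by
  ext i j
  rw [mul_Fmat_apply]
  by_cases hj : j = l
  · simp [mutC, hj]
  · simp only [mutC, if_neg hj]
    linear_combination -mul_max_eq_of_mul_nonneg _ (C i l) (B l j)
      (epsCol_eq_one_or_neg_one C l) (hC.epsCol_mul_nonneg l i)

end SignCoherence

section GStep

lemma mul_colR (X Y : Matrix (Fin n) (Fin n) ℤ) (l : Fin n) : X * colR Y l = colR (X * Y) l := by
  ext i j
  by_cases hj : j = l <;> simp [Matrix.mul_apply, colR, hj]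

lemma colR_matPos_of_nonneg {C : Matrix (Fin n) (Fin n) ℤ} {l : Fin n} (h : ∀ i, 0 ≤ C i l) :
    colR (matPos C) l = colR C l := by
  ext i j
  by_cases hj : j = l <;> simp [colR, matPos, hj, h i]

lemma colR_matPos_of_nonpos {C : Matrix (Fin n) (Fin n) ℤ} {l : Fin n} (h : ∀ i, C i l ≤ 0) :
    colR (matPos C) l = 0 := by
  ext i j
  by_cases hj : j = l <;> simp [colR, matPos, hj, h i]

lemma Jmat_add_colR_matPos (B : Matrix (Fin n) (Fin n) ℤ) {l : Fin n} (hll : B l l = 0) :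
    Jmat n l + colR (matPos B) l = Emat B 1 l := by
  ext i j
  by_cases hj : j = l <;> by_cases hi : i = l <;>
    simp [Jmat, colR, matPos, Emat, Matrix.diagonal_apply, hi, hj, hll, @eq_comm _ l j]

lemma Emat_one_sub_colR (B : Matrix (Fin n) (Fin n) ℤ) {l : Fin n} (hll : B l l = 0) :
    Emat B 1 l - colR B l = Emat B (-1) l := by
  ext i j
  by_cases hj : j = l
  · subst hj
    by_cases hi : i = j
    · simp [Emat, colR, hi, hll]
    · simp only [Matrix.sub_apply, Emat, colR, hi, if_true, if_false, one_mul, neg_mul]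
      linear_combination max_zero_sub_max_neg_zero_eq_self (B i j)
  · simp [Emat, colR, hj]

/-- The g-matrix recursion is `G ↦ G E_ε` once `B₀ C = G B`: according to the sign `ε` of the
sign-coherent column `l` of `C`, the correction `B₀ [C]₊^{•l} = G B^{•l}` either vanishes or turns
`[B]₊^{•l}` into `[-B]₊^{•l}`. -/
lemma mul_Jmat_add_sub_eq_mul_Emat {B₀ B C G : Matrix (Fin n) (Fin n) ℤ} {l : Fin n}
    (hBC : B₀ * C = G * B) (hll : B l l = 0) (hC : SignCoherent C) :
    G * (Jmat n l + colR (matPos B) l) - B₀ * colR (matPos C) l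
      = G * Emat B (-epsCol C l) l := by
  rw [Jmat_add_colR_matPos B hll]
  unfold epsCol
  split_ifs with hneg
  · obtain ⟨p, hp⟩ := hneg
    rw [colR_matPos_of_nonpos (hC.nonpos_of_neg hp), mul_zero, sub_zero, neg_neg]
  · simp only [not_exists, not_lt] at hneg
    rw [colR_matPos_of_nonneg hneg, mul_colR, hBC, ← mul_colR, ← mul_sub,
      Emat_one_sub_colR B hll]

end GStep

section Skew

lemma SkewSymmBy.apply {B : Matrix (Fin n) (Fin n) ℤ} {d : Fin n → ℤ} (h : SkewSymmBy B d)
    (i j : Fin n) : B j i * d j = -(d i * B i j) := by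
  simpa [Matrix.mul_diagonal, Matrix.diagonal_mul] using congr_fun₂ h.2 i j

lemma SkewSymmBy.apply_self {B : Matrix (Fin n) (Fin n) ℤ} {d : Fin n → ℤ} (h : SkewSymmBy B d)
    (l : Fin n) : B l l = 0 := by
  nlinarith [h.apply l l, h.1 l]

lemma SkewSymmBy.transpose_Fmat_mul_diagonal {B : Matrix (Fin n) (Fin n) ℤ} {d : Fin n → ℤ}
    (h : SkewSymmBy B d) (ε : ℤ) (l : Fin n) :
    (Fmat B ε l)ᵀ * diagonal d = diagonal d * Emat B (-ε) l := by
  ext i j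
  rw [Matrix.mul_diagonal, Matrix.diagonal_mul, Matrix.transpose_apply]
  by_cases hj : j = l <;> by_cases hi : i = l
  · simp [Fmat, Emat, hi, hj]
  · subst hj
    have hscaled : ε * B j i * d j = -ε * B i j * d i := by
      linear_combination ε * h.apply i j
    simp only [Fmat, Emat, hi, if_true, if_false]
    rw [mul_comm (d i), max_mul_of_nonneg _ _ (h.1 j).le, max_mul_of_nonneg _ _ (h.1 i).le,
      zero_mul, zero_mul, hscaled]
  · simp [Fmat, Emat, hi, hj, Ne.symm hj]
  · by_cases hij : i = j <;> simp [Fmat, Emat, hj, hij, @eq_comm _ j i]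

lemma SkewSymmBy.diagonal_mul_Fmat {B : Matrix (Fin n) (Fin n) ℤ} {d : Fin n → ℤ}
    (h : SkewSymmBy B d) (ε : ℤ) (l : Fin n) :
    diagonal d * Fmat B ε l = (Emat B (-ε) l)ᵀ * diagonal d := by
  simpa [Matrix.transpose_mul] using congrArg transpose (h.transpose_Fmat_mul_diagonal ε l)

lemma SkewSymmBy.mutB {B : Matrix (Fin n) (Fin n) ℤ} {d : Fin n → ℤ} (h : SkewSymmBy B d)
    (l : Fin n) : SkewSymmBy (mutB B l) d := by
  refine ⟨h.1, ?_⟩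
  rw [mutB_eq_Emat_mul_mul_Fmat B l 1 (Or.inl rfl) (h.apply_self l)]
  have hE := h.diagonal_mul_Fmat 1 l
  have hF := h.transpose_Fmat_mul_diagonal 1 l
  generalize Emat B (-1) l = E at hE hF ⊢
  generalize Fmat B 1 l = F at hE hF ⊢
  calc (E * (B * F))ᵀ * diagonal d = Fᵀ * Bᵀ * (Eᵀ * diagonal d) := by
        simp only [Matrix.transpose_mul, Matrix.mul_assoc]
    _ = Fᵀ * (Bᵀ * diagonal d) * F := by
        rw [← hE]; simp only [Matrix.mul_assoc]
    _ = -((Fᵀ * diagonal d) * B * F) := by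
        rw [h.2]; simp only [Matrix.mul_neg, Matrix.neg_mul, Matrix.mul_assoc]
    _ = -(diagonal d * (E * (B * F))) := by
        rw [hF]; simp only [Matrix.mul_assoc]

end Skew

section Rescaling

variable {d : Fin n → ℤ}

lemma apply_mul_eq_mul_apply_of_mul_diagonal {X Y : Matrix (Fin n) (Fin n) ℤ}
    (h : X * diagonal d = diagonal d * Y) (i j : Fin n) : X i j * d j = d i * Y i j := by
  simpa [Matrix.mul_diagonal, Matrix.diagonal_mul] using congr_fun₂ h i j

lemma mutB_mul_diagonal (hd : ∀ i, 0 ≤ d i) {B B' : Matrix (Fin n) (Fin n) ℤ}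
    (h : B' * diagonal d = diagonal d * B) (l : Fin n) :
    mutB B' l * diagonal d = diagonal d * mutB B l := by
  have he := apply_mul_eq_mul_apply_of_mul_diagonal h
  ext i j
  rw [Matrix.mul_diagonal, Matrix.diagonal_mul]
  simp only [mutB]
  split_ifs
  · rw [neg_mul, he, mul_neg]
  · exact mutation_formula_rescale (hd i) (hd l) (hd j) (he i j) (he i l) (he l j)

lemma mutC_mul_diagonal (hd : ∀ i, 0 ≤ d i) {B B' C C' : Matrix (Fin n) (Fin n) ℤ}
    (hB : B' * diagonal d = diagonal d * B) (hC : C' * diagonal d = diagonal d * C) (l : Fin n) :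
    mutC B' C' l * diagonal d = diagonal d * mutC B C l := by
  have hBe := apply_mul_eq_mul_apply_of_mul_diagonal hB
  have hCe := apply_mul_eq_mul_apply_of_mul_diagonal hC
  ext i j
  rw [Matrix.mul_diagonal, Matrix.diagonal_mul]
  simp only [mutC]
  split_ifs
  · rw [neg_mul, hCe, mul_neg]
  · exact mutation_formula_rescale (hd i) (hd l) (hd j) (hCe i j) (hCe i l) (hBe l j)

end Rescaling

section Recursion

lemma BCG_append_singleton (B₀ : Matrix (Fin n) (Fin n) ℤ) (w : List (Fin n)) (l : Fin n) :
    BCG B₀ (w ++ [l]) = BCGstep B₀ (BCG B₀ w) l := by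
  simp only [BCG, List.foldl_append, List.foldl_cons, List.foldl_nil]

lemma Bmat_append_singleton (B₀ : Matrix (Fin n) (Fin n) ℤ) (w : List (Fin n)) (l : Fin n) :
    Bmat B₀ (w ++ [l]) = mutB (Bmat B₀ w) l := by
  rw [Bmat, BCG_append_singleton]; rfl

lemma Cmat_append_singleton (B₀ : Matrix (Fin n) (Fin n) ℤ) (w : List (Fin n)) (l : Fin n) :
    Cmat B₀ (w ++ [l]) = mutC (Bmat B₀ w) (Cmat B₀ w) l := by
  rw [Cmat, BCG_append_singleton]; rfl

lemma Gmat_append_singleton (B₀ : Matrix (Fin n) (Fin n) ℤ) (w : List (Fin n)) (l : Fin n) :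
    Gmat B₀ (w ++ [l]) = Gmat B₀ w * (Jmat n l + colR (matPos (Bmat B₀ w)) l)
      - B₀ * colR (matPos (Cmat B₀ w)) l := by
  rw [Gmat, BCG_append_singleton]; rfl

lemma SkewSymmBy.Bmat {B₀ : Matrix (Fin n) (Fin n) ℤ} {d : Fin n → ℤ} (h : SkewSymmBy B₀ d)
    (w : List (Fin n)) : SkewSymmBy (Bmat B₀ w) d := by
  induction w using List.reverseRecOn with
  | nil => exact h
  | append_singleton w l ih => rw [Bmat_append_singleton]; exact ih.mutB l

lemma Bmat_Cmat_mul_diagonal {d : Fin n → ℤ} (hd : ∀ i, 0 ≤ d i) {B B' : Matrix (Fin n) (Fin n) ℤ}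
    (h : B' * diagonal d = diagonal d * B) (w : List (Fin n)) :
    Bmat B' w * diagonal d = diagonal d * Bmat B w ∧
      Cmat B' w * diagonal d = diagonal d * Cmat B w := by
  induction w using List.reverseRecOn with
  | nil => simp [Bmat, Cmat, BCG, h]
  | append_singleton w l ih =>
    rw [Bmat_append_singleton, Bmat_append_singleton, Cmat_append_singleton,
      Cmat_append_singleton]
    exact ⟨mutB_mul_diagonal hd ih.1 l, mutC_mul_diagonal hd ih.1 ih.2 l⟩

end Recursion

section Duality

variable {B : Matrix (Fin n) (Fin n) ℤ} {d : Fin n → ℤ}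

lemma Cmat_append_singleton_eq_mul_Fmat (w : List (Fin n)) (l : Fin n)
    (hC : SignCoherent (Cmat B w)) :
    Cmat B (w ++ [l]) = Cmat B w * Fmat (Bmat B w) (epsCol (Cmat B w) l) l := by
  rw [Cmat_append_singleton, mutC_eq_mul_Fmat _ hC]

lemma Gmat_append_singleton_eq_mul_Emat (hB : SkewSymmBy B d) (w : List (Fin n)) (l : Fin n)
    (hC : SignCoherent (Cmat B w)) (hBC : B * Cmat B w = Gmat B w * Bmat B w) :
    Gmat B (w ++ [l]) = Gmat B w * Emat (Bmat B w) (-epsCol (Cmat B w) l) l := by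
  rw [Gmat_append_singleton, mul_Jmat_add_sub_eq_mul_Emat hBC ((hB.Bmat w).apply_self l) hC]

lemma mul_Cmat_eq_Gmat_mul_Bmat (hB : SkewSymmBy B d) (hC : ∀ w, SignCoherent (Cmat B w))
    (w : List (Fin n)) : B * Cmat B w = Gmat B w * Bmat B w := by
  induction w using List.reverseRecOn with
  | nil => simp [Bmat, Cmat, Gmat, BCG]
  | append_singleton w l ih =>
    rw [Cmat_append_singleton_eq_mul_Fmat w l (hC w), Gmat_append_singleton_eq_mul_Emat hB w l
      (hC w) ih, Bmat_append_singleton, mutB_eq_Emat_mul_mul_Fmat _ l _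
      (epsCol_eq_one_or_neg_one _ l) ((hB.Bmat w).apply_self l), ← Matrix.mul_assoc, ih]
    simp only [Matrix.mul_assoc]
    rw [← Matrix.mul_assoc (Emat _ _ l), Emat_mul_self, Matrix.one_mul]

lemma transpose_Gmat_mul_diagonal_mul_Cmat (hB : SkewSymmBy B d)
    (hC : ∀ w, SignCoherent (Cmat B w)) (w : List (Fin n)) :
    (Gmat B w)ᵀ * diagonal d * Cmat B w = diagonal d := by
  induction w using List.reverseRecOn with
  | nil => simp [Cmat, Gmat, BCG]
  | append_singleton w l ih =>
    rw [Cmat_append_singleton_eq_mul_Fmat w l (hC w), Gmat_append_singleton_eq_mul_Emat hB w l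
      (hC w) (mul_Cmat_eq_Gmat_mul_Bmat hB hC w)]
    calc _ = (Emat (Bmat B w) (-epsCol (Cmat B w) l) l)ᵀ * ((Gmat B w)ᵀ * diagonal d * Cmat B w)
          * Fmat (Bmat B w) (epsCol (Cmat B w) l) l := by
          simp only [Matrix.transpose_mul, Matrix.mul_assoc]
      _ = diagonal d := by
          rw [ih, Matrix.mul_assoc, (hB.Bmat w).diagonal_mul_Fmat, ← Matrix.mul_assoc,
            ← Matrix.transpose_mul, Emat_mul_self, Matrix.transpose_one, Matrix.one_mul]

end Duality

end

/-- first tropical duality: under the global sign-coherence hypothesis,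
for every skew-symmetrizable `B` and word `w`, the matrix `C^{-Bᵀ}(w)` is invertible and
`(G^B(w))ᵀ = (C^{-Bᵀ}(w))⁻¹`, i.e. `(G^B(w))ᵀ · C^{-Bᵀ}(w) = I`. -/
theorem tropical_duality_G_C {n : ℕ} (hGSC : GlobalSC n) (B : Matrix (Fin n) (Fin n) ℤ)
    (hB : SkewSymmetrizable B) (w : List (Fin n)) :
    IsUnit (Cmat (-Bᵀ) w) ∧ (Gmat B w)ᵀ * Cmat (-Bᵀ) w = 1 := by
  obtain ⟨d, hd⟩ := hB
  have hdual := transpose_Gmat_mul_diagonal_mul_Cmat hd (hGSC B ⟨d, hd⟩) w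
  have hrescale : Cmat (-Bᵀ) w * diagonal d = diagonal d * Cmat B w :=
    (Bmat_Cmat_mul_diagonal (fun i => (hd.1 i).le) (by rw [Matrix.neg_mul, hd.2, neg_neg]) w).2
  have h : (Gmat B w)ᵀ * Cmat (-Bᵀ) w = 1 := by
    refine Matrix.mul_diagonal_right_cancel (fun i => (hd.1 i).ne') ?_
    rw [Matrix.mul_assoc, hrescale, ← Matrix.mul_assoc, hdual, Matrix.one_mul]
  exact ⟨(Matrix.isUnit_iff_isUnit_det _).2 (Matrix.isUnit_det_of_left_inverse h), h⟩
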